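/- arXiv:0902.4682 — 3 statements merged into one kernel-verified Lean document; each statement's English description precedes it below -/
import Mathlib

section
/- If the universe of a structure M equals the set of interpretations of the terms in a finite set T (i.e., every element of M is the value of some t ∈ T and T is closed enough), then for every formula A and assignment, A is true in M if and only if the Herbrand expansion A^T is true in M. -/
/-- First-order terms over function symbols `F` with arities `ar`, variables in `ℕ`. -/
inductive Tm (F : Type) (ar : F → ℕ) : Type where
  | var : ℕ → Tm F ar
  | fn : (f : F) → (Fin (ar f) → Tm F ar) → Tm F ar

variable {F : Type} {ar : F → ℕ}

/-- Apply a substitution to a term. -/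
def substTm (σ : ℕ → Tm F ar) : Tm F ar → Tm F ar
  | .var n => σ n
  | .fn f args => .fn f (fun i => substTm σ (args i))

/-- Variables occurring in a term. -/
def fvTm : Tm F ar → Set ℕ
  | .var n => {n}
  | .fn _ args => ⋃ i, fvTm (args i)

/-- A term is closed if it contains no variables. -/
def closedTm : Tm F ar → Prop
  | .var _ => False
  | .fn _ args => ∀ i, closedTm (args i)

/-- First-order formulas over function symbols `F`/`ar` and relation symbols `R`/`arR`. -/
inductive Fml (F : Type) (ar : F → ℕ) (R : Type) (arR : R → ℕ) : Type where
  | fls : Fml F ar R arR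
  | atom : (r : R) → (Fin (arR r) → Tm F ar) → Fml F ar R arR
  | not : Fml F ar R arR → Fml F ar R arR
  | or : Fml F ar R arR → Fml F ar R arR → Fml F ar R arR
  | and : Fml F ar R arR → Fml F ar R arR → Fml F ar R arR
  | ex : ℕ → Fml F ar R arR → Fml F ar R arR
  | all : ℕ → Fml F ar R arR → Fml F ar R arR

variable {R : Type} {arR : R → ℕ}

/-- Capture-naive substitution on formulas (substitutes only free occurrences). -/
def substF (σ : ℕ → Tm F ar) : Fml F ar R arR → Fml F ar R arR
  | .fls => .fls
  | .atom r ts => .atom r (fun i => substTm σ (ts i))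
  | .not A => .not (substF σ A)
  | .or A B => .or (substF σ A) (substF σ B)
  | .and A B => .and (substF σ A) (substF σ B)
  | .ex x A => .ex x (substF (Function.update σ x (.var x)) A)
  | .all x A => .all x (substF (Function.update σ x (.var x)) A)

/-- A formula is quantifier-free. -/
def qf : Fml F ar R arR → Prop
  | .fls => True
  | .atom _ _ => True
  | .not A => qf A
  | .or A B => qf A ∧ qf B
  | .and A B => qf A ∧ qf B
  | .ex _ _ => False
  | .all _ _ => False

/-- Free variables of a formula. -/
def fvF : Fml F ar R arR → Set ℕ
  | .fls => ∅
  | .atom _ ts => ⋃ i, fvTm (ts i)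
  | .not A => fvF A
  | .or A B => fvF A ∪ fvF B
  | .and A B => fvF A ∪ fvF B
  | .ex x A => fvF A \ {x}
  | .all x A => fvF A \ {x}

/-- Finite disjunction. -/
def bigOr (l : List (Fml F ar R arR)) : Fml F ar R arR := l.foldr .or .fls

/-- Finite conjunction. -/
def bigAnd (l : List (Fml F ar R arR)) : Fml F ar R arR := l.foldr .and (.not .fls)

/-- The Herbrand expansion `A^T` over a finite set (list) of terms `T`. -/
def expand (T : List (Tm F ar)) : Fml F ar R arR → Fml F ar R arR
  | .fls => .fls
  | .atom r ts => .atom r ts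
  | .not A => .not (expand T A)
  | .or A B => .or (expand T A) (expand T B)
  | .and A B => .and (expand T A) (expand T B)
  | .ex x A => bigOr (T.map fun t => substF (Function.update Tm.var x t) (expand T A))
  | .all x A => bigAnd (T.map fun t => substF (Function.update Tm.var x t) (expand T A))

/-- Evaluation of a term in a structure with functions `fI` under assignment `a`. -/
def evalTm {M : Type} (fI : (f : F) → (Fin (ar f) → M) → M) (a : ℕ → M) : Tm F ar → M
  | .var n => a n
  | .fn f args => fI f (fun i => evalTm fI a (args i))

/-- Tarskian truth of a formula in a structure `(M, fI, rI)` under assignment `a`. -/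
def realize {M : Type} (fI : (f : F) → (Fin (ar f) → M) → M)
    (rI : (r : R) → (Fin (arR r) → M) → Prop) : (ℕ → M) → Fml F ar R arR → Prop
  | _, .fls => False
  | a, .atom r ts => rI r (fun i => evalTm fI a (ts i))
  | a, .not A => ¬ realize fI rI a A
  | a, .or A B => realize fI rI a A ∨ realize fI rI a B
  | a, .and A B => realize fI rI a A ∧ realize fI rI a B
  | a, .ex x A => ∃ m : M, realize fI rI (Function.update a x m) A
  | a, .all x A => ∀ m : M, realize fI rI (Function.update a x m) A

/-- Propositional (truth-functional) evaluation of a quantifier-free formula,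
reading atomic formulas as propositional variables via the valuation `v`. -/
def peval (v : (r : R) → (Fin (arR r) → Tm F ar) → Prop) : Fml F ar R arR → Prop
  | .fls => False
  | .atom r ts => v r ts
  | .not A => ¬ peval v A
  | .or A B => peval v A ∨ peval v B
  | .and A B => peval v A ∧ peval v B
  | .ex _ _ => False
  | .all _ _ => False

theorem evalTm_closed {M : Type} (fI : (f : F) → (Fin (ar f) → M) → M) :
    ∀ (t : Tm F ar), closedTm t → ∀ a b : ℕ → M, evalTm fI a t = evalTm fI b t := by
  intro t
  induction t with
  | var n => intro h; exact h.elim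
  | fn f args ih =>
    intro h a b
    simp only [evalTm]
    congr 1
    funext i
    exact ih i (h i) a b

theorem substTm_eval {M : Type} (fI : (f : F) → (Fin (ar f) → M) → M)
    (σ : ℕ → Tm F ar) (a : ℕ → M) :
    ∀ t : Tm F ar, evalTm fI a (substTm σ t) = evalTm fI (fun n => evalTm fI a (σ n)) t := by
  intro t
  induction t with
  | var n => rfl
  | fn f args ih => simp only [substTm, evalTm]; congr 1; funext i; exact ih i

theorem subst_lemma {M : Type} (fI : (f : F) → (Fin (ar f) → M) → M)
    (rI : (r : R) → (Fin (arR r) → M) → Prop) :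
    ∀ (B : Fml F ar R arR) (σ : ℕ → Tm F ar) (a : ℕ → M),
      (∀ n, closedTm (σ n) ∨ σ n = .var n) →
      (realize fI rI a (substF σ B) ↔ realize fI rI (fun n => evalTm fI a (σ n)) B) := by
  intro B
  induction B with
  | fls => intro σ a _; rfl
  | atom r ts =>
    intro σ a _
    simp only [substF, realize, substTm_eval]
  | not A ih => intro σ a h; simp only [substF, realize, ih _ _ h]
  | or A B ihA ihB => intro σ a h; simp only [substF, realize, ihA _ _ h, ihB _ _ h]
  | and A B ihA ihB => intro σ a h; simp only [substF, realize, ihA _ _ h, ihB _ _ h]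
  | ex x A ih =>
    intro σ a h
    simp only [substF, realize]
    have hσ' : ∀ n, closedTm (Function.update σ x (Tm.var x) n) ∨
        Function.update σ x (Tm.var x) n = .var n := by
      intro n
      by_cases hn : n = x
      · subst hn; right; simp [Function.update]
      · simp [Function.update, hn]; exact h n
    have key : ∀ m : M, (fun n => evalTm fI (Function.update a x m)
        (Function.update σ x (Tm.var x) n)) = Function.update (fun n => evalTm fI a (σ n)) x m := by
      intro m
      funext n
      by_cases hn : n = x
      · subst hn; simp [Function.update, evalTm]
      · simp only [Function.update, dif_neg hn]
        rcases h n with hc | hv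
        · exact evalTm_closed fI _ hc _ _
        · rw [hv]; simp [evalTm, Function.update, hn]
    constructor
    · rintro ⟨m, hm⟩
      rw [ih _ _ hσ', key m] at hm
      exact ⟨m, hm⟩
    · rintro ⟨m, hm⟩
      refine ⟨m, ?_⟩
      rw [ih _ _ hσ', key m]
      exact hm
  | all x A ih =>
    intro σ a h
    simp only [substF, realize]
    have hσ' : ∀ n, closedTm (Function.update σ x (Tm.var x) n) ∨
        Function.update σ x (Tm.var x) n = .var n := by
      intro n
      by_cases hn : n = x
      · subst hn; right; simp [Function.update]
      · simp [Function.update, hn]; exact h n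
    have key : ∀ m : M, (fun n => evalTm fI (Function.update a x m)
        (Function.update σ x (Tm.var x) n)) = Function.update (fun n => evalTm fI a (σ n)) x m := by
      intro m
      funext n
      by_cases hn : n = x
      · subst hn; simp [Function.update, evalTm]
      · simp only [Function.update, dif_neg hn]
        rcases h n with hc | hv
        · exact evalTm_closed fI _ hc _ _
        · rw [hv]; simp [evalTm, Function.update, hn]
    constructor
    · intro hm m
      have := hm m
      rw [ih _ _ hσ'] at this
      rw [key m] at this
      exact this
    · intro hm m
      rw [ih _ _ hσ', key m]
      exact hm m

theorem realize_bigOr {M : Type} (fI : (f : F) → (Fin (ar f) → M) → M)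
    (rI : (r : R) → (Fin (arR r) → M) → Prop) (a : ℕ → M) :
    ∀ l : List (Fml F ar R arR), realize fI rI a (bigOr l) ↔ ∃ B ∈ l, realize fI rI a B := by
  intro l
  induction l with
  | nil => simp [bigOr, realize]
  | cons B l ih => simp [bigOr, realize] at ih ⊢; rw [ih]

theorem realize_bigAnd {M : Type} (fI : (f : F) → (Fin (ar f) → M) → M)
    (rI : (r : R) → (Fin (arR r) → M) → Prop) (a : ℕ → M) :
    ∀ l : List (Fml F ar R arR), realize fI rI a (bigAnd l) ↔ ∀ B ∈ l, realize fI rI a B := by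
  intro l
  induction l with
  | nil => simp [bigAnd, realize]
  | cons B l ih =>
    simp only [bigAnd, List.foldr] at ih ⊢
    simp only [realize, ih, List.mem_cons]
    constructor
    · rintro ⟨hB, hl⟩ C hC
      rcases hC with rfl | hC
      exacts [hB, hl C hC]
    · intro hh
      exact ⟨hh B (Or.inl rfl), fun C hC => hh C (Or.inr hC)⟩

/-- If every element of the universe of the structure `M` is the value
of some closed term in the finite set `T`, then a formula is true in `M` iff its
Herbrand expansion over `T` is true in `M` (under any assignment). -/
theorem stmt3 {F R : Type} {ar : F → ℕ} {arR : R → ℕ} {M : Type}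
    (fI : (f : F) → (Fin (ar f) → M) → M)
    (rI : (r : R) → (Fin (arR r) → M) → Prop)
    (T : List (Tm F ar))
    (hclosed : ∀ t ∈ T, closedTm t)
    (hsurj : ∀ m : M, ∃ t ∈ T, ∀ a : ℕ → M, evalTm fI a t = m) :
    ∀ (A : Fml F ar R arR) (a : ℕ → M),
      realize fI rI a A ↔ realize fI rI a (expand T A) := by
  intro A
  induction A with
  | fls => intro a; rfl
  | atom r ts => intro a; rfl
  | not A ih => intro a; simp only [expand, realize, ih a]
  | or A B ihA ihB => intro a; simp only [expand, realize, ihA a, ihB a]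
  | and A B ihA ihB => intro a; simp only [expand, realize, ihA a, ihB a]
  | ex x A ih =>
    intro a
    have hσ : ∀ t ∈ T, ∀ n, closedTm (Function.update Tm.var x t n) ∨
        Function.update Tm.var x t n = .var n := by
      intro t ht n
      by_cases hn : n = x
      · subst hn; left; simpa using hclosed t ht
      · right; simp [Function.update, hn]
    have key : ∀ t ∈ T, realize fI rI a (substF (Function.update Tm.var x t) (expand T A)) ↔
        realize fI rI (Function.update a x (evalTm fI a t)) (expand T A) := by
      intro t ht
      rw [subst_lemma fI rI _ _ _ (hσ t ht)]
      have heq : (fun n => evalTm fI a (Function.update Tm.var x t n)) =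
          Function.update a x (evalTm fI a t) := by
        funext n
        by_cases hn : n = x <;> simp [Function.update, hn, evalTm]
      rw [heq]
    simp only [expand, realize, realize_bigOr, List.mem_map]
    constructor
    · rintro ⟨m, hm⟩
      obtain ⟨t, ht, hev⟩ := hsurj m
      refine ⟨_, ⟨t, ht, rfl⟩, ?_⟩
      rw [key t ht, hev a]
      exact (ih _).mp hm
    · rintro ⟨_, ⟨t, ht, rfl⟩, hB⟩
      rw [key t ht] at hB
      exact ⟨_, (ih _).mpr hB⟩
  | all x A ih =>
    intro a
    have hσ : ∀ t ∈ T, ∀ n, closedTm (Function.update Tm.var x t n) ∨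
        Function.update Tm.var x t n = .var n := by
      intro t ht n
      by_cases hn : n = x
      · subst hn; left; simpa using hclosed t ht
      · right; simp [Function.update, hn]
    have key : ∀ t ∈ T, realize fI rI a (substF (Function.update Tm.var x t) (expand T A)) ↔
        realize fI rI (Function.update a x (evalTm fI a t)) (expand T A) := by
      intro t ht
      rw [subst_lemma fI rI _ _ _ (hσ t ht)]
      have heq : (fun n => evalTm fI a (Function.update Tm.var x t n)) =
          Function.update a x (evalTm fI a t) := by
        funext n
        by_cases hn : n = x <;> simp [Function.update, hn, evalTm]
      rw [heq]
    simp only [expand, realize, realize_bigAnd, List.mem_map]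
    constructor
    · rintro hm _ ⟨t, ht, rfl⟩
      rw [key t ht]
      exact (ih _).mp (hm _)
    · intro hB m
      obtain ⟨t, ht, hev⟩ := hsurj m
      have := hB _ ⟨t, ht, rfl⟩
      rw [key t ht, hev a] at this
      exact (ih _).mpr this
end

section
/- Soundness of Herbrand's Property C for validity: if A is a first-order sentence with only existential quantifiers (no universal quantifiers), E is A with all quantifiers removed, Y is the set of its quantified variables, and T is a finite set of terms such that the disjunction ⋁_{σ : Y → T} Eσ is a propositional tautology, then A is valid. -/
variable {F : Type} {ar : F → ℕ}

variable {R : Type} {arR : R → ℕ}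

lemma evalTm_subst {M : Type} (fI : (f : F) → (Fin (ar f) → M) → M)
    (a : ℕ → M) (σ : ℕ → Tm F ar) (t : Tm F ar) :
    evalTm fI a (substTm σ t) = evalTm fI (fun n => evalTm fI a (σ n)) t := by
  induction t with
  | var n => rfl
  | fn f args ih => simp [substTm, evalTm, ih]

lemma qf_substF (σ : ℕ → Tm F ar) (B : Fml F ar R arR) (h : qf B) :
    qf (substF σ B) := by
  induction B generalizing σ with
  | fls => trivial
  | atom r ts => trivial
  | not A ih => exact ih σ h
  | or A B ihA ihB => exact ⟨ihA σ h.1, ihB σ h.2⟩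
  | and A B ihA ihB => exact ⟨ihA σ h.1, ihB σ h.2⟩
  | ex x A ih => exact h
  | all x A ih => exact h

lemma peval_realize {M : Type} (fI : (f : F) → (Fin (ar f) → M) → M)
    (rI : (r : R) → (Fin (arR r) → M) → Prop) (a : ℕ → M)
    (B : Fml F ar R arR) (h : qf B) :
    peval (fun r ts => rI r (fun i => evalTm fI a (ts i))) B ↔ realize fI rI a B := by
  induction B with
  | fls => exact Iff.rfl
  | atom r ts => exact Iff.rfl
  | not A ih => exact not_congr (ih h)
  | or A B ihA ihB => exact or_congr (ihA h.1) (ihB h.2)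
  | and A B ihA ihB => exact and_congr (ihA h.1) (ihB h.2)
  | ex x A ih => exact absurd h id
  | all x A ih => exact absurd h id

lemma realize_substF {M : Type} (fI : (f : F) → (Fin (ar f) → M) → M)
    (rI : (r : R) → (Fin (arR r) → M) → Prop) (a : ℕ → M)
    (σ : ℕ → Tm F ar) (B : Fml F ar R arR) (h : qf B) :
    realize fI rI a (substF σ B) ↔ realize fI rI (fun n => evalTm fI a (σ n)) B := by
  induction B generalizing σ with
  | fls => exact Iff.rfl
  | atom r ts =>
    show rI r _ ↔ rI r _
    simp only [evalTm_subst]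
  | not A ih => exact not_congr (ih σ h)
  | or A B ihA ihB => exact or_congr (ihA σ h.1) (ihB σ h.2)
  | and A B ihA ihB => exact and_congr (ihA σ h.1) (ihB σ h.2)
  | ex x A ih => exact absurd h id
  | all x A ih => exact absurd h id

lemma realize_foldr_ex {M : Type} (fI : (f : F) → (Fin (ar f) → M) → M)
    (rI : (r : R) → (Fin (arR r) → M) → Prop) (E : Fml F ar R arR)
    (Y : List ℕ) (a b : ℕ → M) (hab : ∀ n, n ∉ Y → a n = b n)
    (hb : realize fI rI b E) :
    realize fI rI a (Y.foldr .ex E) := by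
  induction Y generalizing a with
  | nil =>
    have : a = b := funext fun n => hab n (by simp)
    rw [List.foldr_nil, this]; exact hb
  | cons y Y' ih =>
    refine ⟨b y, ih (Function.update a y (b y)) ?_⟩
    intro n hn
    by_cases hny : n = y
    · subst hny; simp [Function.update]
    · rw [Function.update_of_ne hny]
      exact hab n (by simp [hny, hn])

/-- Soundness of Herbrand's Property C for validity: if the sentence
`A = ∃y₁…∃yₘ. E` (with `E` quantifier-free, quantified variables `Y`) is such that
the disjunction of the instances `Eσ` over all substitutions `σ : Y → T` is a
propositional tautology, then `A` is valid (true in every nonempty structure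
under every assignment). -/
theorem stmt7 {F R : Type} {ar : F → ℕ} {arR : R → ℕ}
    (E : Fml F ar R arR) (hE : qf E)
    (Y : List ℕ) (hsent : fvF E ⊆ {y | y ∈ Y})
    (T : List (Tm F ar))
    (htaut : ∀ v : (r : R) → (Fin (arR r) → Tm F ar) → Prop,
      ∃ σ : ℕ → Tm F ar,
        (∀ y ∈ Y, σ y ∈ T) ∧ (∀ z, z ∉ Y → σ z = .var z) ∧
        peval v (substF σ E)) :
    ∀ (M : Type), Nonempty M →
      ∀ (fI : (f : F) → (Fin (ar f) → M) → M)
        (rI : (r : R) → (Fin (arR r) → M) → Prop)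
        (a : ℕ → M),
        realize fI rI a (Y.foldr .ex E) := by
  intro M _ fI rI a
  obtain ⟨σ, hσT, hσid, hpe⟩ :=
    htaut (fun r ts => rI r (fun i => evalTm fI a (ts i)))
  have h1 : realize fI rI a (substF σ E) :=
    (peval_realize fI rI a _ (qf_substF σ E hE)).mp hpe
  have h2 : realize fI rI (fun n => evalTm fI a (σ n)) E :=
    (realize_substF fI rI a σ E hE).mp h1
  exact realize_foldr_ex fI rI E Y a _
    (fun n hn => by rw [hσid n hn]; rfl) h2
end

section
/- First-order unification: any two first-order terms that have a common instance have a most general unifier; i.e., if there exists a substitution τ with s·τ = t·τ, then there exists a substitution σ with s·σ = t·σ such that every unifier of s and t factors through σ (for every unifier τ there is a substitution ρ with τ = σ∘ρ on the variables of s and t). -/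
variable {F : Type} {ar : F → ℕ}

/-! Robinson's argument, run on finite systems of equations by well-founded induction on
(number of variables, total size), ordered lexicographically. Deleting `x ≐ x` and
decomposing `f a ≐ f b` into the `aᵢ ≐ bᵢ` keep the unifiers and the variables and shrink
the size. For `x ≐ t` with `t ≠ x`, solvability forces `x ∉ t` (occurs check, by size);
then every unifier `τ` satisfies `τ = τ ∘ [x ↦ t]`, so eliminating `x` keeps the unifiers,
removes a variable, and turns a most general unifier `σ` of the reduced system into the
most general unifier `[x ↦ t] ; σ`. -/

open Function

-- `fvTm` as a `Finset`, so that the variables of a system of equations can be counted.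
def Tm.vars : Tm F ar → Finset ℕ
  | .var n => {n}
  | .fn _ args => Finset.univ.biUnion fun i => (args i).vars

def Tm.size : Tm F ar → ℕ
  | .var _ => 1
  | .fn _ args => 1 + ∑ i, (args i).size

theorem substTm_substTm (σ τ : ℕ → Tm F ar) (u : Tm F ar) :
    substTm τ (substTm σ u) = substTm (substTm τ ∘ σ) u := by
  induction u with
  | var n => rfl
  | fn f a ih => simp [substTm, ih]

theorem substTm_var (u : Tm F ar) : substTm .var u = u := by
  induction u with
  | var n => rfl
  | fn f a ih => simp [substTm, ih]

theorem substTm_congr {σ σ' : ℕ → Tm F ar} {u : Tm F ar}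
    (h : ∀ v ∈ u.vars, σ v = σ' v) : substTm σ u = substTm σ' u := by
  induction u with
  | var n => exact h n (Finset.mem_singleton_self n)
  | fn f a ih =>
    simp only [substTm, Tm.fn.injEq, heq_eq_eq, true_and]
    exact funext fun i => ih i fun v hv => h v (Finset.mem_biUnion.2 ⟨i, Finset.mem_univ i, hv⟩)

theorem Tm.vars_substTm (σ : ℕ → Tm F ar) (u : Tm F ar) :
    (substTm σ u).vars = u.vars.biUnion fun w => (σ w).vars := by
  induction u with
  | var n => simp [substTm, Tm.vars]
  | fn f a ih => simp only [substTm, Tm.vars, ih, Finset.biUnion_biUnion]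

theorem Tm.size_lt_size_fn (f : F) (a : Fin (ar f) → Tm F ar) (i : Fin (ar f)) :
    (a i).size < (Tm.fn f a).size := by
  have := Finset.single_le_sum (fun j _ => Nat.zero_le (a j).size) (Finset.mem_univ i)
  simp only [Tm.size]
  omega

theorem Tm.size_le_size_substTm (σ : ℕ → Tm F ar) {u : Tm F ar} {x : ℕ} (hx : x ∈ u.vars) :
    (σ x).size ≤ (substTm σ u).size := by
  induction u with
  | var n => rw [Finset.mem_singleton.1 hx]; rfl
  | fn f a ih =>
    obtain ⟨i, -, hi⟩ := Finset.mem_biUnion.1 hx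
    exact (ih i hi).trans (Tm.size_lt_size_fn f (fun j => substTm σ (a j)) i).le

theorem substTm_ne_of_mem_vars {x : ℕ} {t : Tm F ar} (hx : x ∈ t.vars) (ht : t ≠ .var x)
    (τ : ℕ → Tm F ar) : τ x ≠ substTm τ t := by
  cases t with
  | var y => exact absurd (by rw [Finset.mem_singleton.1 hx]) ht
  | fn f a =>
    obtain ⟨i, -, hi⟩ := Finset.mem_biUnion.1 hx
    intro h
    have hlt := (Tm.size_le_size_substTm τ hi).trans_lt
      (Tm.size_lt_size_fn f (fun j => substTm τ (a j)) i)
    exact hlt.ne (congrArg Tm.size h)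

theorem substTm_update_self {x : ℕ} {t : Tm F ar} (hx : x ∉ t.vars) :
    substTm (update .var x t) t = t := by
  rw [substTm_congr fun v hv => update_of_ne (ne_of_mem_of_not_mem hv hx) _ _, substTm_var]

theorem substTm_comp_update {τ : ℕ → Tm F ar} {x : ℕ} {t : Tm F ar}
    (h : τ x = substTm τ t) : substTm τ ∘ update .var x t = τ := by
  funext v
  rcases eq_or_ne v x with rfl | hv
  · simp [h]
  · simp [hv, substTm]

theorem Tm.vars_substTm_update_subset {x : ℕ} {t : Tm F ar} (hx : x ∉ t.vars) (u : Tm F ar) :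
    (substTm (update .var x t) u).vars ⊆ (u.vars ∪ t.vars).erase x := by
  intro v hv
  obtain ⟨w, hw, hv⟩ := Finset.mem_biUnion.1 ((Tm.vars_substTm _ u).le hv)
  rcases eq_or_ne w x with rfl | hwx
  · rw [update_self] at hv
    exact Finset.mem_erase.2 ⟨ne_of_mem_of_not_mem hv hx, Finset.mem_union_right _ hv⟩
  · rw [update_of_ne hwx, Tm.vars, Finset.mem_singleton] at hv
    subst hv
    exact Finset.mem_erase.2 ⟨hwx, Finset.mem_union_left _ hw⟩

def IsMGU (U : Set (ℕ → Tm F ar)) (σ : ℕ → Tm F ar) : Prop :=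
  σ ∈ U ∧ ∀ τ ∈ U, ∃ ρ, τ = substTm ρ ∘ σ

abbrev Eqns (F : Type) (ar : F → ℕ) := List (Tm F ar × Tm F ar)

namespace Eqns

def vars : Eqns F ar → Finset ℕ
  | [] => ∅
  | (s, t) :: E => s.vars ∪ t.vars ∪ vars E

def size (E : Eqns F ar) : ℕ := (E.map fun p => p.1.size + p.2.size).sum

def subst (θ : ℕ → Tm F ar) (E : Eqns F ar) : Eqns F ar :=
  E.map (Prod.map (substTm θ) (substTm θ))

def unifiers (E : Eqns F ar) : Set (ℕ → Tm F ar) :=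
  {τ | ∀ p ∈ E, substTm τ p.1 = substTm τ p.2}

theorem mem_vars {E : Eqns F ar} {v : ℕ} :
    v ∈ vars E ↔ ∃ p ∈ E, v ∈ p.1.vars ∨ v ∈ p.2.vars := by
  induction E with
  | nil => simp [vars]
  | cons p E ih => simp [vars, ih, or_assoc]

theorem vars_cons_swap (s t : Tm F ar) (E : Eqns F ar) :
    vars ((s, t) :: E) = vars ((t, s) :: E) := by
  simp only [vars, Finset.union_comm s.vars]

theorem mem_unifiers_cons {τ : ℕ → Tm F ar} {p : Tm F ar × Tm F ar} {E : Eqns F ar} :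
    τ ∈ unifiers (p :: E) ↔ substTm τ p.1 = substTm τ p.2 ∧ τ ∈ unifiers E := by
  simp [unifiers]

theorem unifiers_cons_swap (s t : Tm F ar) (E : Eqns F ar) :
    unifiers ((s, t) :: E) = unifiers ((t, s) :: E) := by
  ext τ
  simp only [mem_unifiers_cons, eq_comm]

theorem unifiers_cons_self (u : Tm F ar) (E : Eqns F ar) :
    unifiers ((u, u) :: E) = unifiers E := by
  ext τ
  simp [mem_unifiers_cons]

theorem mem_unifiers_singleton {τ : ℕ → Tm F ar} {s t : Tm F ar} :
    τ ∈ unifiers [(s, t)] ↔ substTm τ s = substTm τ t := by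
  simp [unifiers]

theorem mem_unifiers_subst {θ τ : ℕ → Tm F ar} {E : Eqns F ar} :
    τ ∈ unifiers (subst θ E) ↔ substTm τ ∘ θ ∈ unifiers E := by
  simp only [unifiers, subst, Set.mem_ofPred_eq, List.forall_mem_map, Prod.map_fst, Prod.map_snd,
    substTm_substTm]

theorem isMGU_var_cons {x : ℕ} {t : Tm F ar} (hx : x ∉ t.vars) {E : Eqns F ar}
    {σ : ℕ → Tm F ar} (hσ : IsMGU (unifiers (subst (update .var x t) E)) σ) :
    IsMGU (unifiers ((.var x, t) :: E)) (substTm σ ∘ update .var x t) := by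
  obtain ⟨hσE, hσmin⟩ := hσ
  rw [mem_unifiers_subst] at hσE
  refine ⟨mem_unifiers_cons.2 ⟨?_, hσE⟩, fun τ hτ => ?_⟩
  · change substTm σ (update Tm.var x t x) = _
    rw [update_self, ← substTm_substTm, substTm_update_self hx]
  · obtain ⟨hτx, hτE⟩ := mem_unifiers_cons.1 hτ
    have hτθ : substTm τ ∘ update .var x t = τ := substTm_comp_update hτx
    obtain ⟨ρ, rfl⟩ := hσmin τ (mem_unifiers_subst.2 (hτθ.symm ▸ hτE))
    refine ⟨ρ, ?_⟩
    conv_lhs => rw [← hτθ]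
    funext v
    exact (substTm_substTm σ ρ _).symm

theorem unifiers_fn_cons (f : F) (a b : Fin (ar f) → Tm F ar) (E : Eqns F ar) :
    unifiers ((.fn f a, .fn f b) :: E) = unifiers (List.ofFn (fun i => (a i, b i)) ++ E) := by
  ext τ
  simp [unifiers, substTm, funext_iff, or_imp, forall_and]

theorem vars_ofFn_append_subset (f : F) (a b : Fin (ar f) → Tm F ar) (E : Eqns F ar) :
    vars (List.ofFn (fun i => (a i, b i)) ++ E) ⊆ vars ((.fn f a, .fn f b) :: E) := by
  intro v hv
  simp only [mem_vars, List.mem_append, List.mem_ofFn] at hv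
  simp only [vars, Tm.vars, Finset.mem_union, Finset.mem_biUnion, Finset.mem_univ, true_and,
    mem_vars]
  grind

theorem size_ofFn_append_lt (f : F) (a b : Fin (ar f) → Tm F ar) (E : Eqns F ar) :
    size (List.ofFn (fun i => (a i, b i)) ++ E) < size ((.fn f a, .fn f b) :: E) := by
  simp only [size, List.map_append, List.map_ofFn, List.sum_append, List.sum_ofFn, comp_apply,
    Finset.sum_add_distrib, List.sum_map_add, List.map_cons, Tm.size, List.sum_cons,
    add_lt_add_iff_right]
  omega

theorem vars_subst_update_subset {x : ℕ} {t : Tm F ar} (hx : x ∉ t.vars) :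
    ∀ E : Eqns F ar, vars (subst (update .var x t) E) ⊆ (vars E ∪ t.vars).erase x
  | [] => Finset.empty_subset _
  | (s, u) :: E => by
    have hs := Tm.vars_substTm_update_subset hx s
    have hu := Tm.vars_substTm_update_subset hx u
    have hE := vars_subst_update_subset hx E
    simp only [subst, vars, List.map_cons, Prod.map, Finset.subset_iff, Finset.mem_union,
      Finset.mem_erase] at hs hu hE ⊢
    grind

theorem card_vars_subst_update_lt {x : ℕ} {t : Tm F ar} (hx : x ∉ t.vars) (E : Eqns F ar) :
    (vars (subst (update .var x t) E)).card < (vars ((.var x, t) :: E)).card := by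
  refine (Finset.card_le_card ((vars_subst_update_subset hx E).trans ?_)).trans_lt
    (Finset.card_erase_lt_of_mem (a := x) (by simp [vars, Tm.vars]))
  exact Finset.erase_subset_erase x fun v => by simp only [vars, Finset.mem_union]; tauto

def complexity (E : Eqns F ar) : ℕ × ℕ := ((vars E).card, size E)

theorem complexity_lex_of_subset_of_size_lt {E' E : Eqns F ar} (hvars : vars E' ⊆ vars E)
    (hsize : size E' < size E) : Prod.Lex (· < ·) (· < ·) (complexity E') (complexity E) :=
  Prod.Lex.toLex_strictMono (Prod.mk_lt_mk_of_le_of_lt (Finset.card_le_card hvars) hsize)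

theorem complexity_cons_swap (s t : Tm F ar) (E : Eqns F ar) :
    complexity ((s, t) :: E) = complexity ((t, s) :: E) := by
  simp only [complexity, vars_cons_swap s, size, List.map_cons, add_comm s.size]

theorem exists_isMGU_var_cons {x : ℕ} {t : Tm F ar} {E : Eqns F ar}
    (hE : (unifiers ((.var x, t) :: E)).Nonempty)
    (ih : ∀ E' : Eqns F ar,
      Prod.Lex (· < ·) (· < ·) (complexity E') (complexity ((.var x, t) :: E)) →
      (unifiers E').Nonempty → ∃ σ, IsMGU (unifiers E') σ) :
    ∃ σ, IsMGU (unifiers ((.var x, t) :: E)) σ := by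
  by_cases ht : t = .var x
  · subst ht
    rw [unifiers_cons_self] at hE ⊢
    exact ih E (complexity_lex_of_subset_of_size_lt Finset.subset_union_right
      (by simp [size, Tm.size])) hE
  obtain ⟨τ, hτ⟩ := hE
  obtain ⟨hτx, hτE⟩ := mem_unifiers_cons.1 hτ
  have hx : x ∉ t.vars := fun hx => substTm_ne_of_mem_vars hx ht τ hτx
  have hτθ : substTm τ ∘ update .var x t = τ := substTm_comp_update hτx
  obtain ⟨σ, hσ⟩ := ih _ (Prod.Lex.left _ _ (card_vars_subst_update_lt hx E))
    ⟨τ, mem_unifiers_subst.2 (hτθ.symm ▸ hτE)⟩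
  exact ⟨_, isMGU_var_cons hx hσ⟩

theorem exists_isMGU_fn_var_cons {f : F} {a : Fin (ar f) → Tm F ar} {x : ℕ} {E : Eqns F ar}
    (hE : (unifiers ((.fn f a, .var x) :: E)).Nonempty)
    (ih : ∀ E' : Eqns F ar,
      Prod.Lex (· < ·) (· < ·) (complexity E') (complexity ((.fn f a, .var x) :: E)) →
      (unifiers E').Nonempty → ∃ σ, IsMGU (unifiers E') σ) :
    ∃ σ, IsMGU (unifiers ((.fn f a, .var x) :: E)) σ := by
  rw [unifiers_cons_swap] at hE ⊢
  rw [complexity_cons_swap] at ih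
  exact exists_isMGU_var_cons hE ih

theorem exists_isMGU_fn_cons {f g : F} {a : Fin (ar f) → Tm F ar} {b : Fin (ar g) → Tm F ar}
    {E : Eqns F ar} (hE : (unifiers ((.fn f a, .fn g b) :: E)).Nonempty)
    (ih : ∀ E' : Eqns F ar,
      Prod.Lex (· < ·) (· < ·) (complexity E') (complexity ((.fn f a, .fn g b) :: E)) →
      (unifiers E').Nonempty → ∃ σ, IsMGU (unifiers E') σ) :
    ∃ σ, IsMGU (unifiers ((.fn f a, .fn g b) :: E)) σ := by
  obtain ⟨τ, hτ⟩ := hE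
  obtain ⟨rfl, -⟩ := Tm.fn.inj (mem_unifiers_cons.1 hτ).1
  rw [unifiers_fn_cons] at hτ ⊢
  exact ih _ (complexity_lex_of_subset_of_size_lt (vars_ofFn_append_subset f a b E)
    (size_ofFn_append_lt f a b E)) ⟨τ, hτ⟩

theorem exists_isMGU (E : Eqns F ar) (hE : (unifiers E).Nonempty) :
    ∃ σ, IsMGU (unifiers E) σ :=
  match E, hE with
  | [], _ => ⟨.var, by simp [unifiers], fun τ _ => ⟨τ, rfl⟩⟩
  | (.var _, _) :: _, hE => exists_isMGU_var_cons hE fun E' _ hE' => exists_isMGU E' hE'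
  | (.fn _ _, .var _) :: _, hE =>
    exists_isMGU_fn_var_cons hE fun E' _ hE' => exists_isMGU E' hE'
  | (.fn _ _, .fn _ _) :: _, hE => exists_isMGU_fn_cons hE fun E' _ hE' => exists_isMGU E' hE'
termination_by complexity E
decreasing_by all_goals assumption

end Eqns

/-- Any two unifiable first-order terms have a most general
unifier: if some substitution `τ` unifies `s` and `t`, then there is a unifier
`σ` of `s` and `t` such that every unifier `τ` factors through `σ` on the
variables of `s` and `t` (i.e. `τ = σ ∘ ρ` there, applying `σ` first). -/
theorem stmt16 {F : Type} {ar : F → ℕ} (s t : Tm F ar)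
    (h : ∃ τ : ℕ → Tm F ar, substTm τ s = substTm τ t) :
    ∃ σ : ℕ → Tm F ar, substTm σ s = substTm σ t ∧
      ∀ τ : ℕ → Tm F ar, substTm τ s = substTm τ t →
        ∃ ρ : ℕ → Tm F ar, ∀ v ∈ fvTm s ∪ fvTm t, τ v = substTm ρ (σ v) := by
  obtain ⟨τ₀, hτ₀⟩ := h
  obtain ⟨σ, hσ, hσmin⟩ :=
    Eqns.exists_isMGU [(s, t)] ⟨τ₀, Eqns.mem_unifiers_singleton.2 hτ₀⟩
  refine ⟨σ, Eqns.mem_unifiers_singleton.1 hσ, fun τ hτ => ?_⟩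
  obtain ⟨ρ, rfl⟩ := hσmin τ (Eqns.mem_unifiers_singleton.2 hτ)
  exact ⟨ρ, fun _ _ => rfl⟩
end
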